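/- The cube of the infinite product ∏_{i≥1}(1-q^i) satisfies (∏_{i≥1}(1-q^i))^3 ≡ Σ_{n≥0} q^{n(n+1)/2} (mod 2); that is, the coefficient of q^N in the cube is odd if and only if N is a triangular number. -/

import Mathlib

/-- `f j = ∏_{i≥1} (1 - q^{j i})` as a formal power series over ℤ (coefficients
computed from a sufficiently long finite truncation of the product). -/
noncomputable def f (j : ℕ) : PowerSeries ℤ :=
  PowerSeries.mk fun N =>
    PowerSeries.coeff (R := ℤ) N (∏ i ∈ Finset.range (N + 1),
      (1 - (PowerSeries.X : PowerSeries ℤ) ^ (j * (i + 1))))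

/-- The multiplicative inverse of `f j` (its constant coefficient is `1`). -/
noncomputable def fInv (j : ℕ) : PowerSeries ℤ := PowerSeries.invOfUnit (f j) 1

/-- Coefficientwise congruence mod 2 of integer power series. -/
def modEq2 (F G : PowerSeries ℤ) : Prop :=
  ∀ n : ℕ, (PowerSeries.coeff (R := ℤ) n F) ≡ (PowerSeries.coeff (R := ℤ) n G) [ZMOD 2]

/-- `b m n` : the number of m-regular partitions of n (no part divisible by m). -/
noncomputable def b (m n : ℕ) : ℤ :=
  (Nat.card {p : n.Partition // ∀ x ∈ p.parts, ¬ m ∣ x} : ℤ)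

/-!
Since `1 - q^i ≡ 1 + q^i` mod 2, the cube `∏(1-q^i)^3` is congruent to `∏(1-q^i)(1+q^i)^2`,
which by Gauss's identity equals `∑_{n≥0} q^{n(n+1)/2}`. Gauss's identity is proved in truncated
form from the q-binomial theorem
`∏_{i<n} (x + q^i y) = ∑_{a+b=n} q^{b(b-1)/2} [a+b choose a]_q x^a y^b`.
At `n = 2M+1`, `x = q^M`, `y = 1` the left side is `2 q^e ∏_{i=1}^M (1+q^i)^2` for some `e`,
and on the right the terms `b = M+1+j` and `b = M-j` agree, so
`∏_{i=1}^M (1+q^i)^2 = ∑_{j≤M} q^{j(j+1)/2} [2M+1 choose M-j]_q`.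
Multiplied by `(q;q)_{2M+1}`, each Gaussian binomial becomes `≡ 1 mod q^{M-j+1}`, so up to `q^M`
the coefficients are those of `∑_j q^{j(j+1)/2}`.
-/

open PowerSeries Finset

namespace Nat

theorem succ_choose_two (n : ℕ) : (n + 1).choose 2 = n.choose 2 + n := by
  rw [choose_succ_succ', choose_one_right, add_comm]

theorem strictMono_succ_choose_two : StrictMono fun n => (n + 1).choose 2 :=
  strictMono_nat_of_lt_succ fun n => by rw [succ_choose_two (n + 1)]; omega

theorem two_mul_succ_choose_two (n : ℕ) : 2 * (n + 1).choose 2 = n * (n + 1) := by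
  rw [choose_two_right, Nat.add_sub_cancel, mul_comm (n + 1),
    Nat.mul_div_cancel' (even_mul_succ_self n).two_dvd]

theorem odd_card_filter_succ_choose_two_eq_iff {n M : ℕ} (hn : n ≤ M) :
    Odd #{j ∈ range (M + 1) | (j + 1).choose 2 = n} ↔ ∃ j, 2 * n = j * (j + 1) := by
  have hmem (j : ℕ) :
      j ∈ {j ∈ range (M + 1) | (j + 1).choose 2 = n} ↔ 2 * n = j * (j + 1) := by
    rw [mem_filter, mem_range, ← two_mul_succ_choose_two]
    have : j ≤ (j + 1).choose 2 := strictMono_succ_choose_two.id_le j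
    constructor
    · rintro ⟨-, rfl⟩; rfl
    · intro h; exact ⟨by omega, by omega⟩
  have hcard : #{j ∈ range (M + 1) | (j + 1).choose 2 = n} ≤ 1 :=
    card_le_one.mpr fun a ha b hb => strictMono_succ_choose_two.injective <| by
      rw [(mem_filter.mp ha).2, (mem_filter.mp hb).2]
  rw [odd_iff, show #{j ∈ range (M + 1) | (j + 1).choose 2 = n} % 2 = 1 ↔
    0 < #{j ∈ range (M + 1) | (j + 1).choose 2 = n} by omega, Finset.card_pos]
  exact exists_congr hmem

end Nat

theorem Finset.dvd_prod_sub_prod {ι R : Type*} [CommRing R] {s : Finset ι} {f g : ι → R}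
    {d : R} (h : ∀ i ∈ s, d ∣ f i - g i) : d ∣ ∏ i ∈ s, f i - ∏ i ∈ s, g i := by
  simp_rw [← Ideal.mem_span_singleton, ← Ideal.Quotient.eq, map_prod] at h ⊢
  exact prod_congr rfl h

namespace PowerSeries

variable {R : Type*} [CommRing R]

noncomputable def qPochhammer (n : ℕ) : R⟦X⟧ := ∏ i ∈ range n, (1 - X ^ (i + 1))

-- `qBinom a b` is the Gaussian binomial coefficient `[a + b choose a]_q`, indexed by the two parts
-- so that Pascal's rule needs no subtraction.
noncomputable def qBinom : ℕ → ℕ → R⟦X⟧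
  | 0, _ => 1
  | _ + 1, 0 => 1
  | a + 1, b + 1 => qBinom a (b + 1) + X ^ (a + 1) * qBinom (a + 1) b

@[simp] theorem qBinom_zero_left (b : ℕ) : (qBinom 0 b : R⟦X⟧) = 1 := by
  rw [qBinom]

@[simp] theorem qBinom_zero_right (a : ℕ) : (qBinom a 0 : R⟦X⟧) = 1 := by
  cases a <;> rw [qBinom]

theorem qBinom_succ_succ (a b : ℕ) :
    (qBinom (a + 1) (b + 1) : R⟦X⟧) = qBinom a (b + 1) + X ^ (a + 1) * qBinom (a + 1) b := by
  rw [qBinom]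

theorem qPochhammer_succ (n : ℕ) :
    (qPochhammer (n + 1) : R⟦X⟧) = qPochhammer n * (1 - X ^ (n + 1)) :=
  prod_range_succ _ _

theorem qPochhammer_add (a b : ℕ) :
    (qPochhammer (a + b) : R⟦X⟧) = qPochhammer a * ∏ i ∈ range b, (1 - X ^ (a + i + 1)) :=
  prod_range_add _ _ _

theorem isUnit_qPochhammer (n : ℕ) : IsUnit (qPochhammer n : R⟦X⟧) := by
  simp [qPochhammer, isUnit_iff_constantCoeff]

theorem qBinom_mul_qPochhammer_mul_qPochhammer (a b : ℕ) :
    (qBinom a b * qPochhammer a * qPochhammer b : R⟦X⟧) = qPochhammer (a + b) := by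
  induction a, b using qBinom.induct with
  | case1 b => simp [qPochhammer]
  | case2 a => simp [qPochhammer]
  | case3 a b ih₁ ih₂ =>
    simp only [Nat.succ_eq_add_one]
    rw [show a + (b + 1) = a + b + 1 by ring, qPochhammer_succ b] at ih₁
    rw [show a + 1 + b = a + b + 1 by ring, qPochhammer_succ a] at ih₂
    rw [qBinom_succ_succ, show a + 1 + (b + 1) = a + b + 1 + 1 by ring,
      qPochhammer_succ (a + b + 1), qPochhammer_succ a, qPochhammer_succ b]
    linear_combination (1 - X ^ (a + 1)) * ih₁ + X ^ (a + 1) * (1 - X ^ (b + 1)) * ih₂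

theorem qBinom_comm (a b : ℕ) : (qBinom a b : R⟦X⟧) = qBinom b a := by
  refine ((isUnit_qPochhammer a).mul (isUnit_qPochhammer b)).mul_right_cancel ?_
  rw [← mul_assoc, qBinom_mul_qPochhammer_mul_qPochhammer, add_comm,
    ← qBinom_mul_qPochhammer_mul_qPochhammer b a]
  ring

theorem prod_add_X_pow_mul_eq_sum_qBinom (x y : R⟦X⟧) (n : ℕ) :
    ∏ i ∈ range n, (x + X ^ i * y) =
      ∑ p ∈ antidiagonal n, X ^ p.2.choose 2 * qBinom p.1 p.2 * x ^ p.1 * y ^ p.2 := by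
  set t : ℕ × ℕ → R⟦X⟧ := fun p => X ^ p.2.choose 2 * qBinom p.1 p.2 * x ^ p.1 * y ^ p.2
  have t_succ_zero (a : ℕ) : t (a + 1, 0) = x * t (a, 0) := by simp [t, pow_succ]; ring
  have t_zero_succ (b : ℕ) : t (0, b + 1) = X ^ b * y * t (0, b) := by
    simp [t, Nat.succ_choose_two, pow_add, pow_succ]; ring
  have t_succ_succ (a b : ℕ) :
      t (a + 1, b + 1) = x * t (a, b + 1) + X ^ (a + b + 1) * y * t (a + 1, b) := by
    simp only [t, qBinom_succ_succ, Nat.succ_choose_two]; ring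
  have t_zero_zero : t (0, 0) = 1 := by simp [t]
  clear_value t
  have key (m : ℕ) :
      ∑ p ∈ antidiagonal (m + 2), t p =
        (x + X ^ (m + 1) * y) * ∑ p ∈ antidiagonal (m + 1), t p := by
    have h_succ_succ : ∑ p ∈ antidiagonal m, t (p.1 + 1, p.2 + 1) =
        x * ∑ p ∈ antidiagonal m, t (p.1, p.2 + 1) +
          X ^ (m + 1) * y * ∑ p ∈ antidiagonal m, t (p.1 + 1, p.2) := by
      rw [mul_sum, mul_sum, ← sum_add_distrib]
      refine sum_congr rfl fun p hp => ?_
      rw [t_succ_succ, mem_antidiagonal.mp hp]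
    rw [Nat.sum_antidiagonal_succ, Nat.sum_antidiagonal_succ', h_succ_succ]
    linear_combination t_zero_succ (m + 1) + t_succ_zero (m + 1) -
      x * Nat.sum_antidiagonal_succ' (f := t) (n := m) -
      X ^ (m + 1) * y * Nat.sum_antidiagonal_succ (f := t) (n := m)
  induction n with
  | zero => simp [t_zero_zero]
  | succ n ih =>
    rw [prod_range_succ, ih]
    rcases n with _ | m
    · simp [Nat.sum_antidiagonal_succ, t_zero_succ, t_succ_zero, t_zero_zero, add_comm]
    · rw [key, mul_comm]

theorem X_pow_dvd_prod_one_sub_X_pow_sub_one {ι : Type*} {s : Finset ι} {e : ι → ℕ} {d : ℕ}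
    (h : ∀ i ∈ s, d ≤ e i) : (X : R⟦X⟧) ^ d ∣ ∏ i ∈ s, (1 - X ^ e i) - 1 := by
  have h' : ∀ i ∈ s, (X : R⟦X⟧) ^ d ∣ (1 - X ^ e i) - 1 := fun i hi => by
    rw [sub_sub_cancel_left, dvd_neg]
    exact pow_dvd_pow X (h i hi)
  simpa using dvd_prod_sub_prod h'

theorem X_pow_dvd_qPochhammer_sub_qPochhammer {m K : ℕ} (h : m ≤ K) :
    (X : R⟦X⟧) ^ (m + 1) ∣ qPochhammer K - qPochhammer m := by
  obtain ⟨r, rfl⟩ := Nat.exists_eq_add_of_le h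
  rw [qPochhammer_add, ← mul_sub_one]
  exact (X_pow_dvd_prod_one_sub_X_pow_sub_one fun i _ => by omega).mul_left _

theorem coeff_qPochhammer_of_le {n K : ℕ} (h : n ≤ K) :
    coeff n (qPochhammer K : R⟦X⟧) = coeff n (qPochhammer n) := by
  rw [← sub_eq_zero, ← map_sub,
    X_pow_dvd_iff.mp (X_pow_dvd_qPochhammer_sub_qPochhammer h) n n.lt_succ_self]

theorem X_pow_dvd_qPochhammer_mul_qBinom_sub_one {a b : ℕ} (h : a ≤ b) :
    (X : R⟦X⟧) ^ (a + 1) ∣ qPochhammer (a + b) * qBinom a b - 1 := by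
  have hab : (qPochhammer (a + b) * qBinom a b : R⟦X⟧) =
      (∏ i ∈ range b, (1 - X ^ (a + i + 1))) * ∏ i ∈ range a, (1 - X ^ (b + i + 1)) := by
    refine ((isUnit_qPochhammer a).mul (isUnit_qPochhammer b)).mul_right_cancel ?_
    calc qPochhammer (a + b) * qBinom a b * (qPochhammer a * qPochhammer b)
        = qPochhammer (a + b) * qPochhammer (a + b) := by
          rw [← qBinom_mul_qPochhammer_mul_qPochhammer]; ring
      _ = _ := by
          nth_rewrite 2 [add_comm]
          rw [qPochhammer_add, qPochhammer_add]; ring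
  have hA : (X : R⟦X⟧) ^ (a + 1) ∣ ∏ i ∈ range b, (1 - X ^ (a + i + 1)) - 1 :=
    X_pow_dvd_prod_one_sub_X_pow_sub_one fun i _ => by omega
  have hB : (X : R⟦X⟧) ^ (a + 1) ∣ ∏ i ∈ range a, (1 - X ^ (b + i + 1)) - 1 :=
    X_pow_dvd_prod_one_sub_X_pow_sub_one fun i _ => by omega
  simpa [hab] using dvd_mul_sub_mul hA hB

theorem coeff_X_pow_mul_of_X_pow_dvd_sub_one {F : R⟦X⟧} {d e n : ℕ} (hF : X ^ d ∣ F - 1)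
    (hn : n < e + d) : coeff n (X ^ e * F) = if n = e then 1 else 0 := by
  have h : X ^ (e + d) ∣ X ^ e * F - X ^ e := by
    rw [pow_add, ← mul_sub_one]; exact mul_dvd_mul_left _ hF
  rw [← sub_add_cancel (X ^ e * F) (X ^ e), map_add, X_pow_dvd_iff.mp h n hn, zero_add,
    coeff_X_pow]

theorem prod_X_pow_add_X_pow (M : ℕ) :
    ∏ i ∈ range (2 * M + 1), ((X : R⟦X⟧) ^ M + X ^ i) =
      X ^ (M.choose 2 + M * (M + 1)) * (2 * (∏ i ∈ range M, (1 + X ^ (i + 1))) ^ 2) := by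
  have low : ∏ i ∈ range M, ((X : R⟦X⟧) ^ M + X ^ i) =
      X ^ M.choose 2 * ∏ i ∈ range M, (1 + X ^ (i + 1)) := by
    rw [← prod_range_reflect, Nat.choose_two_right, ← sum_range_id, ← sum_range_reflect,
      ← prod_pow_eq_pow_sum, ← prod_mul_distrib]
    refine prod_congr rfl fun i hi => ?_
    rw [mul_add, mul_one, ← pow_add, add_comm, show M - 1 - i + (i + 1) = M by simp at hi; omega]
  have high : ∏ i ∈ range (M + 1), ((X : R⟦X⟧) ^ M + X ^ (M + i)) =
      X ^ (M * (M + 1)) * (2 * ∏ i ∈ range M, (1 + X ^ (i + 1))) := by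
    simp_rw [pow_add (X : R⟦X⟧) M, ← mul_one_add, prod_mul_distrib, prod_const, card_range,
      ← pow_mul, prod_range_succ', pow_zero]
    ring
  rw [show 2 * M + 1 = M + (M + 1) by ring, prod_range_add, low, high]
  ring

theorem prod_one_add_X_pow_sq_eq_sum_qBinom [IsDomain R] [CharZero R] (M : ℕ) :
    (∏ i ∈ range M, (1 + X ^ (i + 1)) : R⟦X⟧) ^ 2 =
      ∑ j ∈ range (M + 1), X ^ (j + 1).choose 2 * qBinom (M - j) (M + 1 + j) := by
  have exp_low (j : ℕ) (hj : j ≤ M) : (M + 1 + j).choose 2 + M * (M - j) =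
      M.choose 2 + M * (M + 1) + (j + 1).choose 2 := by
    qify [hj]; simp only [Nat.cast_choose_two]; push_cast; ring
  have exp_high (j : ℕ) (hj : j ≤ M) : (M - j).choose 2 + M * (M + 1 + j) =
      M.choose 2 + M * (M + 1) + (j + 1).choose 2 := by
    qify [hj]; simp only [Nat.cast_choose_two]; push_cast [hj]; ring
  have h := prod_add_X_pow_mul_eq_sum_qBinom (X ^ M : R⟦X⟧) 1 (2 * M + 1)
  simp only [mul_one, one_pow, prod_X_pow_add_X_pow, ← pow_mul] at h
  rw [Nat.sum_antidiagonal_eq_sum_range_succ_mk,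
    show (2 * M + 1).succ = (M + 1) + (M + 1) by omega, sum_range_add, ← sum_range_reflect,
    ← sum_add_distrib] at h
  have h' : (X : R⟦X⟧) ^ (M.choose 2 + M * (M + 1)) *
        (2 * (∏ i ∈ range M, (1 + X ^ (i + 1))) ^ 2) =
      X ^ (M.choose 2 + M * (M + 1)) *
        (2 * ∑ j ∈ range (M + 1), X ^ (j + 1).choose 2 * qBinom (M - j) (M + 1 + j)) := by
    rw [h, mul_sum, mul_sum]
    refine sum_congr rfl fun j hj => ?_
    have hj : j ≤ M := Nat.lt_succ_iff.mp (mem_range.mp hj)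
    rw [show M + 1 - 1 - j = M - j by omega, show 2 * M + 1 - (M - j) = M + 1 + j by omega,
      show 2 * M + 1 - (M + 1 + j) = M - j by omega]
    dsimp only
    rw [qBinom_comm (M + 1 + j), mul_right_comm _ (qBinom _ _), ← pow_add,
      mul_right_comm _ (qBinom _ _), ← pow_add, exp_low j hj, exp_high j hj, pow_add]
    ring
  have h2 : (2 : R⟦X⟧) ≠ 0 := fun h0 => by
    simpa [map_ofNat] using congrArg (constantCoeff (R := R)) h0
  exact mul_left_cancel₀ h2 (mul_left_cancel₀ (pow_ne_zero _ X_ne_zero) h')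

theorem coeff_qPochhammer_mul_prod_one_add_X_pow_sq [IsDomain R] [CharZero R] {n M : ℕ}
    (hn : n ≤ M) :
    coeff n (qPochhammer (2 * M + 1) * (∏ i ∈ range M, (1 + X ^ (i + 1))) ^ 2 : R⟦X⟧) =
      (#{j ∈ range (M + 1) | (j + 1).choose 2 = n} : R) := by
  rw [prod_one_add_X_pow_sq_eq_sum_qBinom, mul_sum, map_sum, natCast_card_filter (R := R)]
  refine sum_congr rfl fun j hj => ?_
  have hj : j ≤ M := Nat.lt_succ_iff.mp (mem_range.mp hj)
  have h : (X : R⟦X⟧) ^ (M - j + 1) ∣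
      qPochhammer (2 * M + 1) * qBinom (M - j) (M + 1 + j) - 1 := by
    rw [show 2 * M + 1 = M - j + (M + 1 + j) by omega]
    exact X_pow_dvd_qPochhammer_mul_qBinom_sub_one (by omega)
  have hle : j ≤ (j + 1).choose 2 := Nat.strictMono_succ_choose_two.id_le j
  rw [mul_left_comm, coeff_X_pow_mul_of_X_pow_dvd_sub_one h (by omega)]
  simp only [eq_comm]

theorem dvd_coeff_of_C_dvd {d : R} {F : R⟦X⟧} (h : C d ∣ F) (n : ℕ) : d ∣ coeff n F := by
  obtain ⟨G, rfl⟩ := h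
  exact ⟨coeff n G, coeff_C_mul n G d⟩

theorem C_two_dvd_qPochhammer_sub_prod_one_add_X_pow (n : ℕ) :
    C 2 ∣ (qPochhammer n - ∏ i ∈ range n, (1 + X ^ (i + 1)) : R⟦X⟧) :=
  dvd_prod_sub_prod fun i _ => ⟨-X ^ (i + 1), by rw [map_ofNat]; ring⟩

end PowerSeries

theorem X_pow_dvd_f_one_sub_qPochhammer {N K : ℕ} (h : N ≤ K) :
    (X : ℤ⟦X⟧) ^ (N + 1) ∣ f 1 - qPochhammer K := by
  refine X_pow_dvd_iff.mpr fun n hn => ?_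
  rw [map_sub, sub_eq_zero, coeff_qPochhammer_of_le (by omega : n ≤ K), f, coeff_mk,
    ← coeff_qPochhammer_of_le n.le_succ]
  simp only [one_mul, qPochhammer]

/-- The coefficient of `q^N` in `(∏_{i≥1}(1-q^i))^3` is odd iff `N` is triangular. -/
theorem cube_triangular_mod_two (N : ℕ) :
    Odd (PowerSeries.coeff (R := ℤ) N ((f 1) ^ 3)) ↔ ∃ n : ℕ, 2 * N = n * (n + 1) := by
  have h_trunc : coeff N (f 1 ^ 3) = coeff N (qPochhammer N ^ 2 * qPochhammer (2 * N + 1)) := by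
    have h := X_pow_dvd_f_one_sub_qPochhammer (le_refl N)
    rw [← sub_eq_zero, ← map_sub, X_pow_dvd_iff.mp _ N N.lt_succ_self]
    rw [show f 1 ^ 3 = f 1 * f 1 * f 1 by ring, sq]
    exact dvd_mul_sub_mul (dvd_mul_sub_mul h h) (X_pow_dvd_f_one_sub_qPochhammer (by omega))
  have h_mod_two : (2 : ℤ) ∣ coeff N (qPochhammer N ^ 2 * qPochhammer (2 * N + 1)) -
      coeff N (qPochhammer (2 * N + 1) * (∏ i ∈ range N, (1 + X ^ (i + 1))) ^ 2) := by
    rw [← map_sub, mul_comm, ← mul_sub]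
    exact dvd_coeff_of_C_dvd (((C_two_dvd_qPochhammer_sub_prod_one_add_X_pow N).trans
      (sub_dvd_pow_sub_pow _ _ 2)).mul_left _) N
  rw [coeff_qPochhammer_mul_prod_one_add_X_pow_sq le_rfl] at h_mod_two
  rw [h_trunc, ← Nat.odd_card_filter_succ_choose_two_eq_iff le_rfl, ← Int.odd_coe_nat,
    ← Int.not_even_iff_odd, ← Int.not_even_iff_odd, not_iff_not]
  exact Int.even_sub.mp (even_iff_two_dvd.mpr h_mod_two)
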